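/- For every integer k ≥ 3, the independence number of the graph 𝒜_k equals k − 2. -/

import Mathlib

open SimpleGraph

/-- Vertices of the graph `𝒜_k` (and `𝒜_{k,S}`): `Sum.inl a` with `a : Fin 3` is the
unstretched vertex `a + 1 ∈ {1,2,3}`, and `Sum.inr (j, t)` with `j : Fin (k-3)` encodes,
for `i = j + 4 ∈ {4,…,k}`, the hub `i₀` (when `t = 0`) and the wings `i₁, i₂`
(when `t = 1, 2`). -/
abbrev AVert (k : ℕ) := Fin 3 ⊕ (Fin (k - 3) × Fin 3)

/-- Edges of `𝒜_{k,S}`: the triangle `{1,2},{2,3},{1,3}`; for each `4 ≤ i ≤ k` the edges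
`{i₀,i₁}, {i₀,i₂}, {i₁,2}, {i₁,3}, {i₂,1}`; for `4 ≤ i < j ≤ k` the edges `{i₂, j₁}`;
and additionally `{i₂, 2}` for `i ∈ S`. -/
def ARel (k : ℕ) (S : Finset ℕ) : AVert k → AVert k → Prop
  | Sum.inl _, Sum.inl _ => True
  | Sum.inl _, Sum.inr _ => False
  | Sum.inr (j, t), Sum.inl a =>
      (t = 1 ∧ (a = 1 ∨ a = 2)) ∨ (t = 2 ∧ a = 0) ∨ (t = 2 ∧ a = 1 ∧ (j : ℕ) + 4 ∈ S)
  | Sum.inr (j, t), Sum.inr (j', t') =>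
      (j = j' ∧ t = 0 ∧ t' ≠ 0) ∨ (t = 2 ∧ t' = 1 ∧ (j : ℕ) < (j' : ℕ))

/-- The graph `𝒜_{k,S}`; the graph `𝒜_k` is `AGraph k ∅`. -/
def AGraph (k : ℕ) (S : Finset ℕ) : SimpleGraph (AVert k) :=
  SimpleGraph.fromRel (ARel k S)

/-- The independence (stability) number of a graph. -/
noncomputable def indepNum {W : Type*} [Fintype W] (G : SimpleGraph W) : ℕ :=
  sSup {n | ∃ s : Finset W, ((↑s : Set W).Pairwise fun u w => ¬ G.Adj u w) ∧ s.card = n}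

/-!
The vertex `3` together with all wings `i₂` is independent, of size `k - 2`. Conversely, an
independent set `s` meets each gadget `{i₀, i₁, i₂}` in at most one vertex, unless it contains
both wings `i₁, i₂`. That can happen for at most one `i`, since `i₂ ~ j₁` for `i < j`, and then
`s` avoids the triangle, because `i₁` sees `2, 3` and `i₂` sees `1`. So the triangle and the
doubled gadgets share a single slot, and `s` injects into `k - 3` gadget slots plus that one.
-/

open Finset

theorem indepNum_eq_indepNum {W : Type*} [Fintype W] (G : SimpleGraph W) :
    _root_.indepNum G = G.indepNum := by
  simp only [_root_.indepNum, SimpleGraph.indepNum, isNIndepSet_iff]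

theorem SimpleGraph.IsIndepSet.not_adj {V : Type*} {G : SimpleGraph V} {s : Set V}
    (hs : G.IsIndepSet s) {u w : V} (hu : u ∈ s) (hw : w ∈ s) : ¬ G.Adj u w :=
  fun h => hs hu hw h.ne h

namespace AGraph

variable {k : ℕ} {S : Finset ℕ}

theorem adj_triangle {a b : Fin 3} (h : a ≠ b) : (AGraph k S).Adj (.inl a) (.inl b) := by
  simp [AGraph, ARel, h]

theorem adj_hub_wing (j : Fin (k - 3)) {t : Fin 3} (ht : t ≠ 0) :
    (AGraph k S).Adj (.inr (j, 0)) (.inr (j, t)) := by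
  simp [AGraph, ARel, ht, Ne.symm ht]

theorem adj_wing₁_triangle (j : Fin (k - 3)) {a : Fin 3} (ha : a ≠ 0) :
    (AGraph k S).Adj (.inr (j, 1)) (.inl a) := by
  have ha12 : a = 1 ∨ a = 2 := by omega
  simp [AGraph, ARel, ha12]

theorem adj_wing₂_triangle_zero (j : Fin (k - 3)) :
    (AGraph k S).Adj (.inr (j, 2)) (.inl 0) := by
  simp [AGraph, ARel]

theorem adj_wing₂_wing₁ {j j' : Fin (k - 3)} (h : j < j') :
    (AGraph k S).Adj (.inr (j, 2)) (.inr (j', 1)) := by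
  simp [AGraph, ARel, h, h.ne]

theorem triangle_notMem_of_wings_mem {s : Set (AVert k)} (hs : (AGraph k S).IsIndepSet s)
    {j : Fin (k - 3)} (h₁ : .inr (j, 1) ∈ s) (h₂ : .inr (j, 2) ∈ s) (a : Fin 3) :
    .inl a ∉ s := by
  intro ha
  by_cases ha0 : a = 0
  · exact hs.not_adj h₂ (ha0 ▸ ha) (adj_wing₂_triangle_zero j)
  · exact hs.not_adj h₁ ha (adj_wing₁_triangle j ha0)

theorem eq_of_wings_mem {s : Set (AVert k)} (hs : (AGraph k S).IsIndepSet s)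
    {j j' : Fin (k - 3)} (h₁ : .inr (j, 1) ∈ s) (h₂ : .inr (j, 2) ∈ s)
    (h₁' : .inr (j', 1) ∈ s) (h₂' : .inr (j', 2) ∈ s) : j = j' := by
  rcases lt_trichotomy j j' with hlt | heq | hgt
  · exact (hs.not_adj h₂ h₁' (adj_wing₂_wing₁ hlt)).elim
  · exact heq
  · exact (hs.not_adj h₂' h₁ (adj_wing₂_wing₁ hgt)).elim

def slot (s : Finset (AVert k)) : AVert k → Option (Fin (k - 3))
  | .inl _ => none
  | .inr (j, t) => if t = 2 ∧ .inr (j, 1) ∈ s then none else some j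

theorem eq_of_slot_eq_none {s : Finset (AVert k)} (hs : (AGraph k S).IsIndepSet s)
    {u w : AVert k} (hu : u ∈ s) (hw : w ∈ s) (hu' : slot s u = none) (hw' : slot s w = none) :
    u = w := by
  rcases u with a | ⟨j, t⟩ <;> rcases w with b | ⟨j', t'⟩
  · by_contra hne
    exact hs.not_adj hu hw (adj_triangle fun h => hne (h ▸ rfl))
  · obtain ⟨rfl, h₁⟩ : t' = 2 ∧ .inr (j', 1) ∈ s := by simpa [slot] using hw'
    exact (triangle_notMem_of_wings_mem hs h₁ hw a hu).elim
  · obtain ⟨rfl, h₁⟩ : t = 2 ∧ .inr (j, 1) ∈ s := by simpa [slot] using hu'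
    exact (triangle_notMem_of_wings_mem hs h₁ hu b hw).elim
  · obtain ⟨rfl, h₁⟩ : t = 2 ∧ .inr (j, 1) ∈ s := by simpa [slot] using hu'
    obtain ⟨rfl, h₁'⟩ : t' = 2 ∧ .inr (j', 1) ∈ s := by simpa [slot] using hw'
    rw [eq_of_wings_mem hs h₁ hu h₁' hw]

theorem eq_of_slot_eq_some {s : Finset (AVert k)} (hs : (AGraph k S).IsIndepSet s)
    {u w : AVert k} (hu : u ∈ s) (hw : w ∈ s) {j : Fin (k - 3)} (hu' : slot s u = some j)
    (hw' : slot s w = some j) : u = w := by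
  rcases u with a | ⟨i, t⟩
  · simp [slot] at hu'
  rcases w with b | ⟨i', t'⟩
  · simp [slot] at hw'
  obtain ⟨hu₂, rfl⟩ : ¬(t = 2 ∧ .inr (i, 1) ∈ s) ∧ i = j := by simpa [slot] using hu'
  obtain ⟨hw₂, rfl⟩ : ¬(t' = 2 ∧ .inr (i', 1) ∈ s) ∧ i' = i := by simpa [slot] using hw'
  by_contra hne
  have htt : t ≠ t' := fun h => hne (h ▸ rfl)
  rcases eq_or_ne t 0 with rfl | ht
  · exact hs.not_adj hu hw (adj_hub_wing _ htt.symm)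
  rcases eq_or_ne t' 0 with rfl | ht'
  · exact hs.not_adj hw hu (adj_hub_wing _ htt)
  obtain ⟨rfl, rfl⟩ | ⟨rfl, rfl⟩ : (t = 1 ∧ t' = 2) ∨ (t = 2 ∧ t' = 1) := by omega
  · exact hw₂ ⟨rfl, hu⟩
  · exact hu₂ ⟨rfl, hw⟩

theorem slot_injOn {s : Finset (AVert k)} (hs : (AGraph k S).IsIndepSet s) :
    Set.InjOn (slot s) s := by
  intro u hu w hw h
  cases hsu : slot s u with
  | none => exact eq_of_slot_eq_none hs hu hw hsu (h ▸ hsu)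
  | some j => exact eq_of_slot_eq_some hs hu hw hsu (h ▸ hsu)

theorem card_le_of_isIndepSet (hk : 3 ≤ k) {s : Finset (AVert k)}
    (hs : (AGraph k S).IsIndepSet s) : #s ≤ k - 2 := by
  calc #s ≤ Fintype.card (Option (Fin (k - 3))) :=
        Finset.card_le_card_of_injOn (slot s) (fun _ _ => Finset.mem_univ _) (slot_injOn hs)
    _ = k - 2 := by rw [Fintype.card_option, Fintype.card_fin]; omega

def wings₂ (k : ℕ) : Finset (AVert k) :=
  insert (.inl 2) (univ.image fun j => .inr (j, 2))

theorem isIndepSet_wings₂ : (AGraph k ∅).IsIndepSet (wings₂ k : Set (AVert k)) := by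
  intro u hu w hw hne
  simp only [wings₂, coe_insert, coe_image, coe_univ, Set.image_univ, Set.mem_insert_iff,
    Set.mem_range] at hu hw
  rcases hu with rfl | ⟨j, rfl⟩ <;> rcases hw with rfl | ⟨j', rfl⟩ <;> simp [AGraph, ARel]

theorem card_wings₂ (hk : 3 ≤ k) : #(wings₂ k) = k - 2 := by
  rw [wings₂, card_insert_of_notMem (by simp),
    card_image_of_injective _ (fun _ _ h => by simpa using h), card_univ, Fintype.card_fin]
  omega

theorem isMaximumIndepSet_wings₂ (hk : 3 ≤ k) : (AGraph k ∅).IsMaximumIndepSet (wings₂ k) :=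
  ⟨isIndepSet_wings₂, fun _ ht => card_wings₂ hk ▸ card_le_of_isIndepSet hk ht⟩

end AGraph

/-- For every `k ≥ 3`, the independence number of `𝒜_k` equals `k - 2`. -/
theorem AGraph_indepNum (k : ℕ) (hk : 3 ≤ k) : _root_.indepNum (AGraph k ∅) = k - 2 := by
  rw [indepNum_eq_indepNum, ← maximumIndepSet_card_eq_indepNum _
    (AGraph.isMaximumIndepSet_wings₂ hk), AGraph.card_wings₂ hk]
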